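/- arXiv:2507.01254 — 3 statements merged into one kernel-verified Lean document; each statement's English description precedes it below -/
import Mathlib

section
/- (Data processing inequality, deterministic case.) Let X, Y be random variables taking values in finite types with joint PMF p(x,y), and let g be any function on the value space of Y. Then the mutual information satisfies I(X; g(Y)) ≤ I(X; Y). -/
/-!
Split the sum defining `I(X; Y)` along the fibres of `g`. On the fibre over `z`, the
log-sum inequality bounds `∑_{g y = z} p(x,y) log (p(x,y) / (p(x) p(y)))` from below by
`p(x,z) log (p(x,z) / (p(x) p(z)))`, where `p(x,z)` and `p(z)` are the pushforward masses, since
`∑_{g y = z} p(x) p(y) = p(x) p(z)`. Summing over `x` and `z` gives `I(X; g(Y)) ≤ I(X; Y)`.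
-/

open Real Finset

namespace Real

lemma mul_log_add_sub_le_mul_log_div {a b c : ℝ} (ha : 0 ≤ a) (hb : 0 ≤ b) (hc : 0 < c)
    (hab : 0 < a → 0 < b) :
    a * log c + a - b * c ≤ a * log (a / b) := by
  rcases ha.eq_or_lt with rfl | ha
  · simpa using mul_nonneg hb hc.le
  have hb := hab ha
  have log_ratio_ge : 1 - b * c / a ≤ log (a / b) - log c := by
    rw [← log_div (by positivity) hc.ne']
    simpa [div_div, inv_div] using one_sub_inv_le_log_of_pos (show 0 < a / b / c by positivity)
  have := mul_le_mul_of_nonneg_left log_ratio_ge ha.le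
  rw [mul_sub, mul_one, mul_div_cancel₀ _ ha.ne'] at this
  linarith

/-- The log-sum inequality. -/
theorem sum_mul_log_sum_div_sum_le {ι : Type*} (s : Finset ι) {a b : ι → ℝ}
    (ha : ∀ i ∈ s, 0 ≤ a i) (hb : ∀ i ∈ s, 0 ≤ b i) (hab : ∀ i ∈ s, 0 < a i → 0 < b i) :
    (∑ i ∈ s, a i) * log ((∑ i ∈ s, a i) / ∑ i ∈ s, b i) ≤ ∑ i ∈ s, a i * log (a i / b i) := by
  rcases (sum_nonneg hb).eq_or_lt with hB | hB
  · have hb0 : ∀ i ∈ s, b i = 0 := (sum_eq_zero_iff_of_nonneg hb).1 hB.symm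
    rw [← hB, div_zero, log_zero, mul_zero]
    exact sum_nonneg fun i hi => by simp [hb0 i hi]
  rcases (sum_nonneg ha).eq_or_lt with hA | hA
  · have ha0 : ∀ i ∈ s, a i = 0 := (sum_eq_zero_iff_of_nonneg ha).1 hA.symm
    rw [← hA, zero_mul]
    exact sum_nonneg fun i hi => by simp [ha0 i hi]
  generalize hc : (∑ i ∈ s, a i) / ∑ i ∈ s, b i = c
  have hc_pos : 0 < c := hc ▸ div_pos hA hB
  calc (∑ i ∈ s, a i) * log c
      = ∑ i ∈ s, (a i * log c + a i - b i * c) := by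
        rw [sum_sub_distrib, sum_add_distrib, ← sum_mul, ← sum_mul, ← hc,
          mul_div_cancel₀ _ hB.ne']
        ring
    _ ≤ ∑ i ∈ s, a i * log (a i / b i) :=
        sum_le_sum fun i hi =>
          mul_log_add_sub_le_mul_log_div (ha i hi) (hb i hi) hc_pos (hab i hi)

end Real
theorem data_processing_inequality_deterministic_general
    {α β γ : Type*} [Fintype α] [Fintype β] [Fintype γ] [DecidableEq γ]
    (p : α → β → ℝ)
    (hnn : ∀ x y, 0 ≤ p x y)
    (g : β → γ) :
    (∑ x, ∑ z, (∑ y, if g y = z then p x y else 0) *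
        Real.log ((∑ y, if g y = z then p x y else 0) /
          ((∑ y', p x y') * (∑ x', ∑ y, if g y = z then p x' y else 0))))
      ≤ ∑ x, ∑ y, p x y *
          Real.log (p x y / ((∑ y', p x y') * (∑ x', p x' y))) := by
  have marginals_pos : ∀ x y, 0 < p x y → 0 < (∑ y', p x y') * ∑ x', p x' y := fun x y h =>
    mul_pos (h.trans_le (single_le_sum (fun y' _ => hnn x y') (mem_univ y)))
      (h.trans_le (single_le_sum (fun x' _ => hnn x' y) (mem_univ x)))
  have pushforward_marginal : ∀ x z, ∑ y with g y = z, (∑ y', p x y') * ∑ x', p x' y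
      = (∑ y', p x y') * ∑ x', ∑ y, if g y = z then p x' y else 0 := fun x z => by
    simp only [← mul_sum, sum_comm (s := univ.filter _), sum_filter]
  calc _ = ∑ x, ∑ z, (∑ y with g y = z, p x y) *
          log ((∑ y with g y = z, p x y) / ∑ y with g y = z, (∑ y', p x y') * ∑ x', p x' y) := by
        simp only [pushforward_marginal, sum_filter]
    _ ≤ ∑ x, ∑ z, ∑ y with g y = z, p x y * log (p x y / ((∑ y', p x y') * ∑ x', p x' y)) :=
        sum_le_sum fun x _ => sum_le_sum fun z _ =>
          sum_mul_log_sum_div_sum_le _ (fun y _ => hnn x y)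
            (fun y _ => mul_nonneg (sum_nonneg fun y' _ => hnn x y') (sum_nonneg fun x' _ => hnn x' y))
            (fun y _ => marginals_pos x y)
    _ = _ := sum_congr rfl fun x _ => sum_fiberwise _ g _

/-- Data processing inequality (deterministic case): for a joint PMF `p` of `(X, Y)`
and any function `g` on the value space of `Y`, `I(X; g(Y)) ≤ I(X; Y)`. The joint
PMF of `(X, g(Y))` is the pushforward of `p` along `(x, y) ↦ (x, g y)`. -/
theorem data_processing_inequality_deterministic
    {α β γ : Type*} [Fintype α] [Fintype β] [Fintype γ] [DecidableEq γ]
    (p : α → β → ℝ)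
    (hnn : ∀ x y, 0 ≤ p x y)
    (hsum : ∑ x, ∑ y, p x y = 1)
    (g : β → γ) :
    (∑ x, ∑ z, (∑ y, if g y = z then p x y else 0) *
        Real.log ((∑ y, if g y = z then p x y else 0) /
          ((∑ y', p x y') * (∑ x', ∑ y, if g y = z then p x' y else 0))))
      ≤ ∑ x, ∑ y, p x y *
          Real.log (p x y / ((∑ y', p x y') * (∑ x', p x' y))) :=
  data_processing_inequality_deterministic_general p hnn g
end

section
/- (Pseudo-divergence property: strict positivity on the diagonal for α ≠ 2.) Let Ω be a finite type equipped with counting measure, let α, β > 1 be conjugate exponents with 1/α + 1/β = 1 and α ≠ 2, and let p : Ω → ℝ be a nonnegative function that takes at least two distinct strictly positive values. Then the Hölder statistical pseudo-divergence of p from itself is strictly positive: D_α^H(p : p) > 0. Hence D_α^H is a pseudo-divergence rather than a divergence for α ≠ 2. -/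
open scoped BigOperators

lemma strict_young {α β x y : ℝ} (hα : 1 < α) (hβ : 1 < β) (hconj : 1 / α + 1 / β = 1)
    (hx : 0 ≤ x) (hy : 0 ≤ y) (hxy : x ≠ y) :
    x ^ (1/α) * y ^ (1/β) < x/α + y/β := by
  have hαpos : 0 < α := lt_trans one_pos hα
  have hβpos : 0 < β := lt_trans one_pos hβ
  have hainv : 0 < 1/α := by positivity
  have hbinv : 0 < 1/β := by positivity
  rcases eq_or_lt_of_le hx with h0 | hxpos
  · have hy' : 0 < y := lt_of_le_of_ne hy (by rw [← h0] at hxy; exact hxy)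
    rw [← h0, Real.zero_rpow (ne_of_gt hainv), zero_mul, zero_div, zero_add]
    positivity
  rcases eq_or_lt_of_le hy with h0 | hypos
  · rw [← h0, Real.zero_rpow (ne_of_gt hbinv), mul_zero, zero_div, add_zero]
    positivity
  have hlog := strictConcaveOn_log_Ioi.2 (Set.mem_Ioi.2 hxpos) (Set.mem_Ioi.2 hypos)
      hxy hainv hbinv hconj
  simp only [smul_eq_mul] at hlog
  have hlhs : x ^ (1/α) * y ^ (1/β) = Real.exp (1/α * Real.log x + 1/β * Real.log y) := by
    rw [Real.exp_add, Real.rpow_def_of_pos hxpos, Real.rpow_def_of_pos hypos,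
      mul_comm (Real.log x), mul_comm (Real.log y)]
  have hrhs : 0 < 1/α * x + 1/β * y := by positivity
  calc x ^ (1/α) * y ^ (1/β) = Real.exp (1/α * Real.log x + 1/β * Real.log y) := hlhs
    _ < Real.exp (Real.log (1/α * x + 1/β * y)) := Real.exp_lt_exp.2 hlog
    _ = 1/α * x + 1/β * y := Real.exp_log hrhs
    _ = x/α + y/β := by ring

/-- Strict positivity of the Hölder statistical pseudo-divergence on the diagonal
for `α ≠ 2`: on a finite type with counting measure, if the nonnegative function
`p` takes two distinct strictly positive values, then `D_α^H(p : p) > 0`. -/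
theorem holder_pseudo_divergence_self_pos
    {Ω : Type*} [Fintype Ω]
    (α β : ℝ) (hα : 1 < α) (hβ : 1 < β) (hconj : 1 / α + 1 / β = 1)
    (hα2 : α ≠ 2)
    (p : Ω → ℝ) (hpnn : ∀ x, 0 ≤ p x)
    (htwo : ∃ a b : Ω, 0 < p a ∧ 0 < p b ∧ p a ≠ p b) :
    0 < -Real.log ((∑ x, p x * p x) /
        ((∑ x, p x ^ α) ^ (1 / α) * (∑ x, p x ^ β) ^ (1 / β))) := by
  obtain ⟨a, b, hpa, hpb, hab⟩ := htwo
  have hαpos : 0 < α := lt_trans one_pos hα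
  have hβpos : 0 < β := lt_trans one_pos hβ
  set A := ∑ x, p x ^ α with hA_def
  set B := ∑ x, p x ^ β with hB_def
  have hA : 0 < A := Finset.sum_pos' (fun x _ => Real.rpow_nonneg (hpnn x) α)
    ⟨a, Finset.mem_univ a, Real.rpow_pos_of_pos hpa α⟩
  have hB : 0 < B := Finset.sum_pos' (fun x _ => Real.rpow_nonneg (hpnn x) β)
    ⟨a, Finset.mem_univ a, Real.rpow_pos_of_pos hpa β⟩
  have hAr : 0 < A ^ (1/α) := Real.rpow_pos_of_pos hA _
  have hBr : 0 < B ^ (1/β) := Real.rpow_pos_of_pos hB _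
  set u : Ω → ℝ := fun x => p x ^ α / A with hu_def
  set v : Ω → ℝ := fun x => p x ^ β / B with hv_def
  have hu_nn : ∀ x, 0 ≤ u x := fun x => div_nonneg (Real.rpow_nonneg (hpnn x) α) hA.le
  have hv_nn : ∀ x, 0 ≤ v x := fun x => div_nonneg (Real.rpow_nonneg (hpnn x) β) hB.le
  have hcancelα : (fun x : Ω => (p x ^ α) ^ (1/α)) = fun x => p x := by
    funext x
    rw [← Real.rpow_mul (hpnn x), mul_one_div_cancel (ne_of_gt hαpos), Real.rpow_one]
  have hcancelβ : (fun x : Ω => (p x ^ β) ^ (1/β)) = fun x => p x := by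
    funext x
    rw [← Real.rpow_mul (hpnn x), mul_one_div_cancel (ne_of_gt hβpos), Real.rpow_one]
  have key : ∀ x, u x ^ (1/α) * v x ^ (1/β)
      = p x * p x / (A ^ (1/α) * B ^ (1/β)) := by
    intro x
    have h1 : u x ^ (1/α) = p x / A ^ (1/α) := by
      rw [hu_def, Real.div_rpow (Real.rpow_nonneg (hpnn x) α) hA.le,
        show (p x ^ α) ^ (1/α) = p x from congrFun hcancelα x]
    have h2 : v x ^ (1/β) = p x / B ^ (1/β) := by
      rw [hv_def, Real.div_rpow (Real.rpow_nonneg (hpnn x) β) hB.le,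
        show (p x ^ β) ^ (1/β) = p x from congrFun hcancelβ x]
    rw [h1, h2]; ring
  -- there is a point where u ≠ v
  have hαβ : α ≠ β := by
    intro h
    apply hα2
    rw [h] at hconj
    have : β = 2 := by field_simp at hconj; linarith
    rw [h, this]
  have hne : ∃ x, u x ≠ v x := by
    by_contra hcon
    push_neg at hcon
    have hstep : ∀ x : Ω, 0 < p x → p x ^ (α - β) = A / B := by
      intro x hx
      have := hcon x
      rw [hu_def, hv_def] at this
      have h2 : p x ^ α * B = p x ^ β * A := by
        field_simp at this; linarith [this]
      have hpb' : (0:ℝ) < p x ^ β := Real.rpow_pos_of_pos hx β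
      rw [Real.rpow_sub hx]
      field_simp
      linarith [h2]
    have h1 := hstep a hpa
    have h2 := hstep b hpb
    have h3 : p a ^ (α - β) = p b ^ (α - β) := h1.trans h2.symm
    have hsub : α - β ≠ 0 := sub_ne_zero.2 hαβ
    have : p a = p b := by
      have := congrArg (fun t => t ^ (1/(α-β))) h3
      simpa [← Real.rpow_mul hpa.le, ← Real.rpow_mul hpb.le,
        mul_inv_cancel₀ hsub, Real.rpow_one] using this
    exact hab this
  obtain ⟨x0, hx0⟩ := hne
  -- the strict sum inequality
  have hsum_u : ∑ x, u x = 1 := by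
    rw [hu_def]; rw [← Finset.sum_div]; exact div_self (ne_of_gt hA)
  have hsum_v : ∑ x, v x = 1 := by
    rw [hv_def]; rw [← Finset.sum_div]; exact div_self (ne_of_gt hB)
  have hlt : ∑ x, u x ^ (1/α) * v x ^ (1/β) < ∑ x, (u x / α + v x / β) := by
    apply Finset.sum_lt_sum
    · intro i _
      rcases eq_or_ne (u i) (v i) with h | h
      · rw [h]
        have hv' := hv_nn i
        have heq : v i ^ (1/α) * v i ^ (1/β) = v i / α + v i / β :=
          calc v i ^ (1/α) * v i ^ (1/β) = v i ^ (1/α + 1/β) :=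
                (Real.rpow_add' hv' (by rw [hconj]; norm_num)).symm
            _ = v i := by rw [hconj, Real.rpow_one]
            _ = v i / α + v i / β := by
                rw [div_eq_mul_one_div (v i) α, div_eq_mul_one_div (v i) β, ← mul_add,
                  hconj, mul_one]
        exact heq.le
      · exact (strict_young hα hβ hconj (hu_nn i) (hv_nn i) h).le
    · exact ⟨x0, Finset.mem_univ x0, strict_young hα hβ hconj (hu_nn x0) (hv_nn x0) hx0⟩
  have hsum_rhs : ∑ x, (u x / α + v x / β) = 1 := by
    rw [Finset.sum_add_distrib,
      show (∑ x, u x / α) = (∑ x, u x) / α from (Finset.sum_div ..).symm,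
      show (∑ x, v x / β) = (∑ x, v x) / β from (Finset.sum_div ..).symm,
      hsum_u, hsum_v, hconj]
  have hsum_lhs : ∑ x, u x ^ (1/α) * v x ^ (1/β)
      = (∑ x, p x * p x) / (A ^ (1/α) * B ^ (1/β)) := by
    rw [Finset.sum_congr rfl (fun x _ => key x), ← Finset.sum_div]
  have hratio_lt : (∑ x, p x * p x) / (A ^ (1/α) * B ^ (1/β)) < 1 := by
    rw [← hsum_lhs]; rw [hsum_rhs] at hlt; exact hlt
  have hratio_pos : 0 < (∑ x, p x * p x) / (A ^ (1/α) * B ^ (1/β)) := by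
    apply div_pos _ (mul_pos hAr hBr)
    exact Finset.sum_pos' (fun x _ => mul_nonneg (hpnn x) (hpnn x))
      ⟨a, Finset.mem_univ a, mul_pos hpa hpa⟩
  linarith [Real.log_neg hratio_pos hratio_lt]
end

section
/- (Variational lower bound for mutual information / Barber–Agakov bound.) Let X, Y be random variables taking values in finite types with joint PMF p(x,y), marginals p(x), p(y), and let q(·|y) be any family of PMFs indexed by y (a variational approximation of the conditional distribution p(x|y)) such that q(x|y) > 0 whenever p(x,y) > 0. Then ∑_{x,y} p(x,y) log q(x|y) ≤ ∑_{x,y} p(x,y) log( p(x,y)/p(y) ), and consequently I(X;Y) ≥ H(X) + ∑_{x,y} p(x,y) log q(x|y). Hence maximizing the variational term E[log q(X|Y)] maximizes a lower bound on the mutual information. -/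
open scoped BigOperators

/-- Variational lower bound for mutual information (Barber–Agakov bound): for a
joint PMF `p` of `(X, Y)` and any family `q(·|y)` of PMFs with `q(x|y) > 0`
whenever `p(x,y) > 0`, the expected variational log-likelihood is at most
`∑ p(x,y) log(p(x,y)/p(y))`, and consequently
`I(X;Y) ≥ H(X) + E[log q(X|Y)]`. -/
theorem barber_agakov_bound
    {α β : Type*} [Fintype α] [Fintype β]
    (p : α → β → ℝ)
    (hnn : ∀ x y, 0 ≤ p x y)
    (hsum : ∑ x, ∑ y, p x y = 1)
    (q : β → α → ℝ)
    (hqnn : ∀ y x, 0 ≤ q y x)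
    (hqsum : ∀ y, ∑ x, q y x = 1)
    (hqpos : ∀ x y, 0 < p x y → 0 < q y x) :
    (∑ x, ∑ y, p x y * Real.log (q y x))
        ≤ ∑ x, ∑ y, p x y * Real.log (p x y / (∑ x', p x' y)) ∧
    (-∑ x, (∑ y, p x y) * Real.log (∑ y, p x y))
        + (∑ x, ∑ y, p x y * Real.log (q y x))
      ≤ ∑ x, ∑ y, p x y *
          Real.log (p x y / ((∑ y', p x y') * (∑ x', p x' y))) := by
  set P : β → ℝ := fun y => ∑ x', p x' y with hP
  set Q : α → ℝ := fun x => ∑ y', p x y' with hQ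
  have hPnn : ∀ y, 0 ≤ P y := fun y => Finset.sum_nonneg fun x _ => hnn x y
  have hQnn : ∀ x, 0 ≤ Q x := fun x => Finset.sum_nonneg fun y _ => hnn x y
  have hPle : ∀ x y, p x y ≤ P y := fun x y =>
    Finset.single_le_sum (fun x' _ => hnn x' y) (Finset.mem_univ x)
  have hQle : ∀ x y, p x y ≤ Q x := fun x y =>
    Finset.single_le_sum (fun y' _ => hnn x y') (Finset.mem_univ y)
  have hPsum : ∑ y, P y = 1 := by
    rw [← hsum, Finset.sum_comm]
  -- first inequality
  have h1 : (∑ x, ∑ y, p x y * Real.log (q y x))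
      ≤ ∑ x, ∑ y, p x y * Real.log (p x y / P y) := by
    have key : ∀ x y, p x y * Real.log (q y x) - p x y * Real.log (p x y / P y)
        ≤ q y x * P y - p x y := by
      intro x y
      rcases eq_or_lt_of_le (hnn x y) with h0 | hpos
      · rw [← h0]
        simp [mul_nonneg (hqnn y x) (hPnn y)]
      · have hq := hqpos x y hpos
        have hPy : 0 < P y := lt_of_lt_of_le hpos (hPle x y)
        have ht : 0 < q y x * P y / p x y := by positivity
        have := Real.log_le_sub_one_of_pos ht
        have hlog : Real.log (q y x * P y / p x y)
            = Real.log (q y x) - Real.log (p x y / P y) := by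
          rw [Real.log_div (by positivity) (ne_of_gt hpos),
            Real.log_mul (ne_of_gt hq) (ne_of_gt hPy),
            Real.log_div (ne_of_gt hpos) (ne_of_gt hPy)]
          ring
        have h2 : p x y * Real.log (q y x * P y / p x y)
            ≤ p x y * (q y x * P y / p x y - 1) :=
          mul_le_mul_of_nonneg_left this (le_of_lt hpos)
        rw [hlog] at h2
        calc p x y * Real.log (q y x) - p x y * Real.log (p x y / P y)
            = p x y * (Real.log (q y x) - Real.log (p x y / P y)) := by ring
          _ ≤ p x y * (q y x * P y / p x y - 1) := h2
          _ = q y x * P y - p x y := by field_simp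
    have hsum2 : ∑ x, ∑ y, (q y x * P y - p x y) = 0 := by
      rw [Finset.sum_comm]
      have : ∀ y, ∑ x, (q y x * P y - p x y) = P y - P y := by
        intro y
        rw [Finset.sum_sub_distrib, ← Finset.sum_mul, hqsum y, one_mul]
      simp [this]
    have : (∑ x, ∑ y, (p x y * Real.log (q y x) - p x y * Real.log (p x y / P y)))
        ≤ ∑ x, ∑ y, (q y x * P y - p x y) :=
      Finset.sum_le_sum fun x _ => Finset.sum_le_sum fun y _ => key x y
    simp only [Finset.sum_sub_distrib] at this hsum2
    linarith
  refine ⟨h1, ?_⟩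
  -- rewrite RHS of second inequality
  have hsplit : ∀ x y, p x y * Real.log (p x y / (Q x * P y))
      = p x y * Real.log (p x y / P y) - p x y * Real.log (Q x) := by
    intro x y
    rcases eq_or_lt_of_le (hnn x y) with h0 | hpos
    · simp [← h0]
    · have hPy : 0 < P y := lt_of_lt_of_le hpos (hPle x y)
      have hQx : 0 < Q x := lt_of_lt_of_le hpos (hQle x y)
      rw [Real.log_div (ne_of_gt hpos) (by positivity),
        Real.log_mul (ne_of_gt hQx) (ne_of_gt hPy),
        Real.log_div (ne_of_gt hpos) (ne_of_gt hPy)]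
      ring
  have hxlog : ∀ x, ∑ y, p x y * Real.log (Q x) = Q x * Real.log (Q x) := by
    intro x
    rw [← Finset.sum_mul]
  have hRHS : (∑ x, ∑ y, p x y * Real.log (p x y / (Q x * P y)))
      = (∑ x, ∑ y, p x y * Real.log (p x y / P y))
        - ∑ x, Q x * Real.log (Q x) := by
    rw [← Finset.sum_sub_distrib]
    refine Finset.sum_congr rfl fun x _ => ?_
    rw [← hxlog x, ← Finset.sum_sub_distrib]
    exact Finset.sum_congr rfl fun y _ => hsplit x y
  rw [hRHS]
  linarith
end
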